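/- arXiv:1710.03530 — 3 statements merged into one kernel-verified Lean document; each statement's English description precedes it below -/
import Mathlib

section
/- For any matrices A, B and any vector x, A⋉(B⋉x) = (A⋉B)⋉x, where on the left and with x the vector product A⋉x := (A⊗I_{t/n})(x⊗1_{t/r}) is used (A ∈ M_{m×n}, x ∈ R^r, t = lcm(n,r), 1_k the all-ones column vector), and A⋉B is the semi-tensor product of matrices. -/
open Matrix Kronecker

noncomputable section

/-- `A ⊗ I_s`, reindexed to `Fin (m*s) × Fin (n*s)` index types. -/
def mkron {m n : ℕ} (A : Matrix (Fin m) (Fin n) ℝ) (s : ℕ) :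
    Matrix (Fin (m * s)) (Fin (n * s)) ℝ :=
  Matrix.reindex finProdFinEquiv finProdFinEquiv
    (Matrix.kroneckerMap (· * ·) A (1 : Matrix (Fin s) (Fin s) ℝ))

/-- `x ⊗ 1_s`: each entry of `x` repeated `s` times (Kronecker with the all-ones vector). -/
def vkron {r : ℕ} (x : Fin r → ℝ) (s : ℕ) : Fin (r * s) → ℝ :=
  fun i => x (finProdFinEquiv.symm i).1

/-- The semi-tensor (M-) product `A ⋉ B = (A ⊗ I_{t/n})(B ⊗ I_{t/p})`, `t = lcm n p`. -/
def stp {m n p q : ℕ} (A : Matrix (Fin m) (Fin n) ℝ) (B : Matrix (Fin p) (Fin q) ℝ) :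
    Matrix (Fin (m * (Nat.lcm n p / n))) (Fin (q * (Nat.lcm n p / p))) ℝ :=
  mkron A (Nat.lcm n p / n) *
    (mkron B (Nat.lcm n p / p)).submatrix
      (Fin.cast (by
        rw [Nat.mul_div_cancel' (Nat.dvd_lcm_left n p),
          Nat.mul_div_cancel' (Nat.dvd_lcm_right n p)])) id

/-- The vector (V-) product `A ⋉_V x = (A ⊗ I_{t/n})(x ⊗ 1_{t/r})`, `t = lcm n r`. -/
def vprod {m n r : ℕ} (A : Matrix (Fin m) (Fin n) ℝ) (x : Fin r → ℝ) :
    Fin (m * (Nat.lcm n r / n)) → ℝ :=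
  (mkron A (Nat.lcm n r / n)).mulVec fun j =>
    vkron x (Nat.lcm n r / r)
      (Fin.cast (by
        rw [Nat.mul_div_cancel' (Nat.dvd_lcm_left n r),
          Nat.mul_div_cancel' (Nat.dvd_lcm_right n r)]) j)

/-- V-addition `x ⊞ y = (x ⊗ 1_{t/m}) + (y ⊗ 1_{t/n})`, `t = lcm m n`. -/
def vadd2 {m n : ℕ} (x : Fin m → ℝ) (y : Fin n → ℝ) : Fin (Nat.lcm m n) → ℝ :=
  fun i =>
    vkron x (Nat.lcm m n / m) (Fin.cast (Nat.mul_div_cancel' (Nat.dvd_lcm_left m n)).symm i) +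
    vkron y (Nat.lcm m n / n) (Fin.cast (Nat.mul_div_cancel' (Nat.dvd_lcm_right m n)).symm i)

/-- V-subtraction `x ⊟ y = (x ⊗ 1_{t/m}) - (y ⊗ 1_{t/n})`, `t = lcm m n`. -/
def vsub2 {m n : ℕ} (x : Fin m → ℝ) (y : Fin n → ℝ) : Fin (Nat.lcm m n) → ℝ :=
  fun i =>
    vkron x (Nat.lcm m n / m) (Fin.cast (Nat.mul_div_cancel' (Nat.dvd_lcm_left m n)).symm i) -
    vkron y (Nat.lcm m n / n) (Fin.cast (Nat.mul_div_cancel' (Nat.dvd_lcm_right m n)).symm i)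

/-- The dimension-normalized norm `‖x‖_V = sqrt((1/k) ∑ xᵢ²)`. -/
def vnorm {k : ℕ} (x : Fin k → ℝ) : ℝ :=
  Real.sqrt ((∑ i, x i ^ 2) / k)

/-- The dimension-free inner product `⟨x,y⟩_V = (1/t)⟨x⊗1_{t/m}, y⊗1_{t/n}⟩`. -/
def vinner {m n : ℕ} (x : Fin m → ℝ) (y : Fin n → ℝ) : ℝ :=
  (∑ i : Fin (Nat.lcm m n),
      vkron x (Nat.lcm m n / m) (Fin.cast (Nat.mul_div_cancel' (Nat.dvd_lcm_left m n)).symm i) *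
      vkron y (Nat.lcm m n / n)
        (Fin.cast (Nat.mul_div_cancel' (Nat.dvd_lcm_right m n)).symm i)) /
    (Nat.lcm m n)

/-- The dimension-free distance `d(x,y) = ‖x ⊟ y‖_V`. -/
def vdist {m n : ℕ} (x : Fin m → ℝ) (y : Fin n → ℝ) : ℝ := vnorm (vsub2 x y)

/-- The spectral norm `‖A‖ = sqrt(σ_max(AᵀA))` (largest eigenvalue of `AᵀA = AᴴA` over `ℝ`). -/
def specNorm {m n : ℕ} (A : Matrix (Fin m) (Fin n) ℝ) : ℝ :=
  Real.sqrt (⨆ i, (show (Aᵀ * A).IsHermitian by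
    simpa using Matrix.isHermitian_conjTranspose_mul_self A).eigenvalues i)

/-- Vector equivalence: `x ↔ y` iff `x ⊗ 1_α = y ⊗ 1_β` for some `α, β ≥ 1`. -/
def VEquiv {m n : ℕ} (x : Fin m → ℝ) (y : Fin n → ℝ) : Prop :=
  ∃ (α β : ℕ), 0 < α ∧ 0 < β ∧
    ∃ h : m * α = n * β, ∀ i, vkron x α i = vkron y β (Fin.cast h i)

/-- Matrix equivalence: `A ∼ B` iff `A ⊗ I_α = B ⊗ I_β` for some `α, β ≥ 1`. -/
def MEquiv {m n p q : ℕ} (A : Matrix (Fin m) (Fin n) ℝ) (B : Matrix (Fin p) (Fin q) ℝ) : Prop :=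
  ∃ (α β : ℕ), 0 < α ∧ 0 < β ∧
    ∃ (h1 : m * α = p * β) (h2 : n * α = q * β),
      ∀ i j, mkron A α i j = mkron B β (Fin.cast h1 i) (Fin.cast h2 j)

/-- `R^r` is `A`-invariant: `A ⋉_V x ∈ R^r` for every `x ∈ R^r`. -/
def AInvariant {m n : ℕ} (A : Matrix (Fin m) (Fin n) ℝ) (r : ℕ) : Prop :=
  ∀ x : Fin r → ℝ, ∃ y : Fin r → ℝ,
    (⟨_, vprod A x⟩ : Σ k : ℕ, Fin k → ℝ) = ⟨r, y⟩

/-!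
Inflation `M ↦ M ⊗ I_s`, `v ↦ v ⊗ 1_s` is compatible with products, `(M ⊗ I_s)(v ⊗ 1_s) = Mv ⊗ 1_s`
and `MN ⊗ I_s = (M ⊗ I_s)(N ⊗ I_s)`, and inflating by `s` and then by `s'` is inflating by `ss'`.
So both sides reduce to `(A ⊗ I_α)(B ⊗ I_β)(x ⊗ 1_γ)`, with `α = lcm(n, p·lcm(q,r)/q)/n` on the left
and `α = (lcm(n,p)/n)·(lcm(q d, r)/(q d))`, `d = lcm(n,p)/p`, on the right. Multiplied by `nq`, both
become `lcm(q·lcm(n,p), pr)`; `β` and `γ` are then forced by `nα = pβ`, `qβ = rγ`.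
-/

section Inflation

variable {m n r : ℕ}

lemma vkron_apply (x : Fin r → ℝ) (s : ℕ) (i : Fin (r * s)) : vkron x s i = x i.divNat :=
  rfl

lemma mkron_finProdFinEquiv (A : Matrix (Fin m) (Fin n) ℝ) {s : ℕ} (i : Fin m) (j : Fin n)
    (k l : Fin s) :
    mkron A s (finProdFinEquiv (i, k)) (finProdFinEquiv (j, l))
      = A i j * (1 : Matrix (Fin s) (Fin s) ℝ) k l := by
  simp [mkron]

lemma vkron_finProdFinEquiv (x : Fin r → ℝ) {s : ℕ} (i : Fin r) (k : Fin s) :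
    vkron x s (finProdFinEquiv (i, k)) = x i := by
  simp [vkron]

lemma Fin.divNat_cast_mul_assoc {s s' : ℕ} (i : Fin (m * s * s')) :
    (Fin.cast (mul_assoc m s s') i).divNat = i.divNat.divNat :=
  Fin.ext (by simp [Fin.divNat, Nat.div_div_eq_div_mul, mul_comm])

lemma finProdFinEquiv_assoc {s s' : ℕ} (a : Fin m) (b : Fin s) (c : Fin s') :
    Fin.cast (mul_assoc m s s') (finProdFinEquiv (finProdFinEquiv (a, b), c))
      = finProdFinEquiv (a, finProdFinEquiv (b, c)) :=
  Fin.ext (by simp only [Fin.val_cast, finProdFinEquiv_apply_val]; ring)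

lemma vkron_vkron (x : Fin r → ℝ) (u u' : ℕ) :
    vkron (vkron x u) u' = vkron x (u * u') ∘ Fin.cast (mul_assoc r u u') := by
  ext i
  simp only [Function.comp_apply, vkron_apply, Fin.divNat_cast_mul_assoc]

lemma mkron_mkron (A : Matrix (Fin m) (Fin n) ℝ) (s s' : ℕ) :
    mkron (mkron A s) s'
      = (mkron A (s * s')).submatrix (Fin.cast (mul_assoc m s s'))
          (Fin.cast (mul_assoc n s s')) := by
  ext i j
  obtain ⟨⟨i', c⟩, rfl⟩ := finProdFinEquiv.surjective i
  obtain ⟨⟨a, b⟩, rfl⟩ := finProdFinEquiv.surjective i'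
  obtain ⟨⟨j', c'⟩, rfl⟩ := finProdFinEquiv.surjective j
  obtain ⟨⟨a', b'⟩, rfl⟩ := finProdFinEquiv.surjective j'
  simp only [submatrix_apply, finProdFinEquiv_assoc, mkron_finProdFinEquiv, mul_assoc]
  congr 1
  simp only [one_apply, finProdFinEquiv.apply_eq_iff_eq, Prod.mk.injEq, ite_and, ite_mul, one_mul,
    zero_mul]

lemma mkron_mulVec_vkron {k : ℕ} (M : Matrix (Fin m) (Fin k) ℝ) (v : Fin k → ℝ) (s : ℕ) :
    mkron M s *ᵥ vkron v s = vkron (M *ᵥ v) s := by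
  ext i
  obtain ⟨⟨a, b⟩, rfl⟩ := finProdFinEquiv.surjective i
  simp [mulVec, dotProduct, ← finProdFinEquiv.sum_comp, Fintype.sum_prod_type,
    mkron_finProdFinEquiv, vkron_finProdFinEquiv, one_apply]

lemma mkron_mul {k : ℕ} (M : Matrix (Fin m) (Fin k) ℝ) (N : Matrix (Fin k) (Fin n) ℝ) (s : ℕ) :
    mkron (M * N) s = mkron M s * mkron N s := by
  simp only [mkron, reindex_apply, submatrix_mul_equiv, ← mul_kronecker_mul, Matrix.mul_one]

end Inflation

lemma mkron_submatrix_cast {k l n : ℕ} (M : Matrix (Fin l) (Fin n) ℝ) (h : k = l) (s : ℕ) :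
    mkron (M.submatrix (Fin.cast h) id) s = (mkron M s).submatrix (Fin.cast (by rw [h])) id := by
  subst h
  rfl

lemma vkron_comp_cast {k l : ℕ} (v : Fin l → ℝ) (h : k = l) (s : ℕ) :
    vkron (v ∘ Fin.cast h) s = vkron v s ∘ Fin.cast (by rw [h]) :=
  rfl

lemma vkron_mkron_mulVec {p q r : ℕ} (B : Matrix (Fin p) (Fin q) ℝ) (x : Fin r → ℝ) {t u : ℕ}
    (h : q * t = r * u) (s : ℕ) :
    vkron (mkron B t *ᵥ fun j => vkron x u (Fin.cast h j)) s
      = (mkron B (t * s) *ᵥ (vkron x (u * s) ∘ Fin.cast (by rw [← mul_assoc, h, mul_assoc])))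
          ∘ Fin.cast (mul_assoc p t s) := by
  rw [← mkron_mulVec_vkron, mkron_mkron, ← Function.comp_def, vkron_comp_cast, vkron_vkron]
  exact submatrix_mulVec_equiv _ _ (finCongr (mul_assoc p t s)) (finCongr (mul_assoc q t s))

lemma submatrix_cast_mulVec {k k' l l' : ℕ} (M : Matrix (Fin k') (Fin l') ℝ) (hk : k = k')
    (hl : l = l') (v : Fin l → ℝ) :
    M.submatrix (Fin.cast hk) (Fin.cast hl) *ᵥ v
      = (M *ᵥ (v ∘ Fin.cast hl.symm)) ∘ Fin.cast hk := by
  subst hk hl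
  rfl

lemma Fin.cast_comp_cast {k l o : ℕ} (h : k = l) (h' : l = o) :
    Fin.cast h' ∘ Fin.cast h = Fin.cast (h.trans h') :=
  rfl

section Chain

variable {m n p q r : ℕ} (A : Matrix (Fin m) (Fin n) ℝ) (B : Matrix (Fin p) (Fin q) ℝ)
  (x : Fin r → ℝ)

/-- The common normal form `(A ⊗ I_α)(B ⊗ I_β)(x ⊗ 1_γ)` of both sides. -/
def kronChain (α β γ : ℕ) (h₁ : n * α = p * β) (h₂ : q * β = r * γ) : Fin (m * α) → ℝ :=
  mkron A α *ᵥ ((mkron B β *ᵥ (vkron x γ ∘ Fin.cast h₂)) ∘ Fin.cast h₁)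

lemma kronChain_congr (hp : 0 < p) (hr : 0 < r) {α β γ α' β' γ' : ℕ} (hα : α = α')
    (h₁ : n * α = p * β) (h₂ : q * β = r * γ) (h₁' : n * α' = p * β') (h₂' : q * β' = r * γ') :
    (⟨_, kronChain A B x α β γ h₁ h₂⟩ : Σ k : ℕ, Fin k → ℝ)
      = ⟨_, kronChain A B x α' β' γ' h₁' h₂'⟩ := by
  subst hα
  obtain rfl : β = β' := Nat.eq_of_mul_eq_mul_left hp (h₁.symm.trans h₁')
  obtain rfl : γ = γ' := Nat.eq_of_mul_eq_mul_left hr (h₂.symm.trans h₂')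
  rfl

lemma vprod_vprod_eq_kronChain {l k a b : ℕ} (hl : Nat.lcm q r / q = l)
    (hk : Nat.lcm q r / r = k) (ha : Nat.lcm n (p * l) / n = a)
    (hb : Nat.lcm n (p * l) / (p * l) = b)
    (h₁ : n * a = p * (l * b)) (h₂ : q * (l * b) = r * (k * b)) :
    (⟨_, vprod A (vprod B x)⟩ : Σ k : ℕ, Fin k → ℝ)
      = ⟨_, kronChain A B x a (l * b) (k * b) h₁ h₂⟩ := by
  subst hl hk ha hb
  unfold vprod kronChain
  rw [vkron_mkron_mulVec]
  rfl

lemma vprod_stp_eq_kronChain {c d e f : ℕ} (hc : Nat.lcm n p / n = c) (hd : Nat.lcm n p / p = d)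
    (he : Nat.lcm (q * d) r / (q * d) = e) (hf : Nat.lcm (q * d) r / r = f)
    (h₁ : n * (c * e) = p * (d * e)) (h₂ : q * (d * e) = r * f) :
    (⟨_, vprod (stp A B) x⟩ : Σ k : ℕ, Fin k → ℝ)
      = ⟨_, kronChain A B x (c * e) (d * e) f h₁ h₂⟩ := by
  subst hc hd he hf
  unfold vprod stp kronChain
  -- `erw`: the product in `stp` elaborates through the `HMul` instance of `CStarMatrix`
  erw [mkron_mul]
  rw [mkron_mkron, mkron_submatrix_cast, mkron_mkron]
  simp only [submatrix_submatrix, Fin.cast_comp_cast, Function.comp_id, ← mulVec_mulVec,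
    submatrix_cast_mulVec]
  exact Fin.sigma_eq_of_eq_comp_cast (mul_assoc _ _ _) rfl

end Chain

lemma Nat.mul_lcm_div_left (a b : ℕ) : a * (Nat.lcm a b / a) = Nat.lcm a b :=
  Nat.mul_div_cancel' (Nat.dvd_lcm_left a b)

lemma Nat.mul_lcm_div_right (a b : ℕ) : b * (Nat.lcm a b / b) = Nat.lcm a b :=
  Nat.mul_div_cancel' (Nat.dvd_lcm_right a b)

lemma lcm_factor_assoc {n p q r a c d e l : ℕ} (hn : 0 < n) (hq : 0 < q)
    (hl : q * l = Nat.lcm q r) (ha : n * a = Nat.lcm n (p * l)) (hc : n * c = Nat.lcm n p)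
    (hd : p * d = Nat.lcm n p) (he : q * d * e = Nat.lcm (q * d) r) : a = c * e := by
  refine Nat.eq_of_mul_eq_mul_left hn (Nat.eq_of_mul_eq_mul_left hq ?_)
  calc q * (n * a)
      = Nat.lcm (q * n) (p * Nat.lcm q r) := by rw [ha, ← Nat.lcm_mul_left, ← hl]; ring_nf
    _ = Nat.lcm (q * Nat.lcm n p) (p * r) := by
        rw [← Nat.lcm_mul_left, ← Nat.lcm_mul_left, ← Nat.lcm_assoc, mul_comm p q]
    _ = p * (q * d * e) := by rw [he, ← hd, ← Nat.lcm_mul_left]; ring_nf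
    _ = q * (n * (c * e)) := by rw [← mul_assoc n, hc, ← hd]; ring

theorem vprod_stp_assoc_general {m n p q r : ℕ} (hn : 0 < n) (hp : 0 < p)
    (hq : 0 < q) (hr : 0 < r)
    (A : Matrix (Fin m) (Fin n) ℝ) (B : Matrix (Fin p) (Fin q) ℝ) (x : Fin r → ℝ) :
    (⟨_, vprod A (vprod B x)⟩ : Σ k : ℕ, Fin k → ℝ) = ⟨_, vprod (stp A B) x⟩ := by
  open Nat in
  rw [vprod_vprod_eq_kronChain A B x rfl rfl rfl rfl
      (by rw [← mul_assoc, mul_lcm_div_right, mul_lcm_div_left])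
      (by rw [← mul_assoc, ← mul_assoc, mul_lcm_div_left, mul_lcm_div_right]),
    vprod_stp_eq_kronChain A B x rfl rfl rfl rfl
      (by rw [← mul_assoc, ← mul_assoc, mul_lcm_div_left, mul_lcm_div_right])
      (by rw [← mul_assoc, mul_lcm_div_left, mul_lcm_div_right])]
  exact kronChain_congr A B x hp hr
    (lcm_factor_assoc hn hq (mul_lcm_div_left q r) (mul_lcm_div_left _ _) (mul_lcm_div_left n p)
      (mul_lcm_div_right n p) (mul_lcm_div_left _ _)) _ _ _ _

/-- the V-product is an action of the STP monoid:
`A ⋉_V (B ⋉_V x) = (A ⋉ B) ⋉_V x`. -/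
theorem vprod_stp_assoc {m n p q r : ℕ} (hm : 0 < m) (hn : 0 < n) (hp : 0 < p)
    (hq : 0 < q) (hr : 0 < r)
    (A : Matrix (Fin m) (Fin n) ℝ) (B : Matrix (Fin p) (Fin q) ℝ) (x : Fin r → ℝ) :
    (⟨_, vprod A (vprod B x)⟩ : Σ k : ℕ, Fin k → ℝ) = ⟨_, vprod (stp A B) x⟩ :=
  vprod_stp_assoc_general hn hp hq hr A B x
end
end

section
/- Let A ∈ M_{m×n} with m | n (i.e., n = m·μ_x). Then R^r is A-invariant under the V-product (i.e., A⋉_V x ∈ R^r for all x ∈ R^r) if and only if r = lcm(r, m·μ_x)/μ_x. -/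
open Matrix Kronecker

noncomputable section

theorem Sigma.exists_mk_eq_mk_iff {ι : Type*} {β : ι → Type*} {a b : ι} (v : β a) :
    (∃ y : β b, (⟨a, v⟩ : Sigma β) = ⟨b, y⟩) ↔ a = b :=
  ⟨fun ⟨_, h⟩ => congrArg Sigma.fst h, fun h => by subst h; exact ⟨v, rfl⟩⟩

theorem Nat.mul_div_mul_eq_div_of_mul_dvd {m μ L : ℕ} (h : m * μ ∣ L) :
    m * (L / (m * μ)) = L / μ := by
  have hm : m ∣ L / μ := Nat.dvd_div_of_mul_dvd (mul_comm m μ ▸ h)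
  rw [mul_comm m μ, ← Nat.div_div_eq_div_mul, Nat.mul_div_cancel' hm]

theorem aInvariant_iff_mul_lcm_div_eq {m n : ℕ} (A : Matrix (Fin m) (Fin n) ℝ) (r : ℕ) :
    AInvariant A r ↔ m * (Nat.lcm n r / n) = r :=
  (forall_congr' fun x => Sigma.exists_mk_eq_mk_iff (β := fun k => Fin k → ℝ) (vprod A x)).trans
    (forall_const _)

theorem ainvariant_iff_general {m μ r : ℕ}
    (A : Matrix (Fin m) (Fin (m * μ)) ℝ) :
    AInvariant A r ↔ r = Nat.lcm r (m * μ) / μ := by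
  rw [aInvariant_iff_mul_lcm_div_eq, Nat.mul_div_mul_eq_div_of_mul_dvd (Nat.dvd_lcm_left _ _),
    Nat.lcm_comm, eq_comm]

/-- for `A ∈ M_{m×mμ}`, `R^r` is `A`-invariant under the V-product iff
`r = lcm(r, mμ)/μ`. -/
theorem ainvariant_iff {m μ r : ℕ} (hm : 0 < m) (hμ : 0 < μ) (hr : 0 < r)
    (A : Matrix (Fin m) (Fin (m * μ)) ℝ) :
    AInvariant A r ↔ r = Nat.lcm r (m * μ) / μ :=
  ainvariant_iff_general A
end
end

section
/- Let A ∈ M_{k×kμ_x} and suppose r satisfies r = lcm(r, kμ_x)/μ_x (so R^r is A-invariant). Then the restriction of the V-product action of A to R^r is given by the square matrix A_r = (A ⊗ I_{r/k})(I_r ⊗ 1_{μ_x}), i.e., A⋉_V x = A_r x for all x ∈ R^r. -/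
open Matrix Kronecker

noncomputable section

/-! The invariance condition says exactly that `lcm (k μ) r = r μ`, so the V-product pads `A`
by `I_{r/k}` and `x` by `1_μ`; and `x ⊗ 1_μ` is the image of `x` under `I_r ⊗ 1_μ`. -/

theorem Nat.lcm_eq_mul_of_eq_lcm_div {n r μ : ℕ} (hμ : μ ∣ n) (h : r = Nat.lcm r n / μ) :
    Nat.lcm n r = r * μ := by
  rw [Nat.lcm_comm]
  nth_rewrite 2 [h]
  exact (Nat.div_mul_cancel (hμ.trans (Nat.dvd_lcm_right r n))).symm

theorem vprod_eq_mkron_mulVec_vkron {m n r s u : ℕ} (A : Matrix (Fin m) (Fin n) ℝ)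
    (x : Fin r → ℝ) (hs : Nat.lcm n r / n = s) (hu : Nat.lcm n r / r = u) (h : n * s = r * u) :
    (⟨_, vprod A x⟩ : Σ a : ℕ, Fin a → ℝ) =
      ⟨m * s, mkron A s *ᵥ fun j => vkron x u (Fin.cast h j)⟩ := by
  subst hs hu
  rfl

theorem kron_one_ones_mulVec {r μ : ℕ} (x : Fin r → ℝ) :
    Matrix.reindex finProdFinEquiv finProdFinEquiv
        (Matrix.kroneckerMap (· * ·) (1 : Matrix (Fin r) (Fin r) ℝ)
          (Matrix.of fun (_ : Fin μ) (_ : Fin 1) => (1 : ℝ))) *ᵥ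
        (fun j => x (Fin.cast (mul_one r) j)) = vkron x μ := by
  funext p
  rw [mulVec, dotProduct, ← Equiv.sum_comp finProdFinEquiv]
  have hcast : ∀ (a : Fin r) (b : Fin 1), Fin.cast (mul_one r) (finProdFinEquiv (a, b)) = a :=
    fun a b => Fin.ext (by simp)
  simp [Fintype.sum_prod_type, one_apply, hcast, vkron]

/-- on an `A`-invariant space `R^r`, the V-product action of
`A ∈ M_{k×kμ}` is given by the square matrix `A_r = (A ⊗ I_{r/k})(I_r ⊗ 1_μ)`. -/
theorem vprod_restrict {k μ r : ℕ} (hμ : 0 < μ) (hr : 0 < r)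
    (hinv : r = Nat.lcm r (k * μ) / μ) (A : Matrix (Fin k) (Fin (k * μ)) ℝ) :
    ∀ x : Fin r → ℝ,
      (⟨_, vprod A x⟩ : Σ a : ℕ, Fin a → ℝ)
        = ⟨k * (r / k),
            (mkron A (r / k) *
              (Matrix.reindex finProdFinEquiv finProdFinEquiv
                (Matrix.kroneckerMap (· * ·) (1 : Matrix (Fin r) (Fin r) ℝ)
                  (Matrix.of fun (_ : Fin μ) (_ : Fin 1) => (1 : ℝ)))).submatrix
                (Fin.cast (show k * μ * (r / k) = r * μ by
                  have h1 : μ ∣ Nat.lcm r (k * μ) :=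
                    dvd_trans (dvd_mul_left μ k) (Nat.dvd_lcm_right r (k * μ))
                  have h2 : r * μ = Nat.lcm r (k * μ) := by
                    nth_rewrite 1 [hinv]; exact Nat.div_mul_cancel h1
                  have h3 : k * μ ∣ r * μ := by
                    rw [h2]; exact Nat.dvd_lcm_right r (k * μ)
                  have h4 : k ∣ r := (Nat.mul_dvd_mul_iff_right hμ).mp h3
                  calc k * μ * (r / k) = k * (r / k) * μ := by ring
                    _ = r * μ := by rw [Nat.mul_div_cancel' h4]))
                id).mulVec (fun j => x (Fin.cast (mul_one r) j))⟩ := by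
  intro x
  have hlcm : Nat.lcm (k * μ) r = r * μ := Nat.lcm_eq_mul_of_eq_lcm_div (dvd_mul_left μ k) hinv
  have hkr : k ∣ r := (Nat.mul_dvd_mul_iff_right hμ).mp (hlcm ▸ Nat.dvd_lcm_left (k * μ) r)
  rw [vprod_eq_mkron_mulVec_vkron A x (s := r / k) (u := μ)
    (by rw [hlcm, Nat.mul_div_mul_right r k hμ]) (by rw [hlcm, Nat.mul_div_cancel_left μ hr])
    (by rw [mul_right_comm, Nat.mul_div_cancel' hkr])]
  rw [← mulVec_mulVec]
  congr 2
  funext j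
  exact (congrFun (kron_one_ones_mulVec x) _).symm
end
end
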